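/- arXiv:1408.3040 — 5 statements merged into one kernel-verified Lean document; each statement's English description precedes it below -/
import Mathlib

section
/- Write f = log C. Then (1/4)·(f'''(0) + 2·f''''(0) + f'''''(0)) = g·(1 − 2α)(6α − 1) / (16α); equivalently, the operator (1/4)(1 + d/dT)² applied to f''' and evaluated at T = 0 equals g(1 − 2α)(6α − 1)/(16α). -/
open Real MeasureTheory Filter

/-- `Σ = √(3α²/2 − 1/8)`. -/
noncomputable def Sg (α : ℝ) : ℝ := Real.sqrt (3 * α ^ 2 / 2 - 1 / 8)

/-- `C(T) = Σ·cosh(ΣT) + α·sinh(ΣT)`. -/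
noncomputable def Cg (α : ℝ) (T : ℝ) : ℝ :=
  Sg α * Real.cosh (Sg α * T) + α * Real.sinh (Sg α * T)

/-!
Since `C'' = Σ² C`, the logarithmic derivative `h = C'/C` solves the Riccati equation
`h' = Σ² - h²`. Hence every derivative `f⁽ⁿ⁺¹⁾ = h⁽ⁿ⁾` is a polynomial in `h`, and at `T = 0`,
where `h(0) = α`, the claim becomes a polynomial identity in `α` and `Σ² = 3α²/2 - 1/8`.
-/

open Polynomial Topology

/-- If `h' = c - h²`, then `h⁽ⁿ⁾ = (riccatiPoly c n)(h)`. -/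
noncomputable def riccatiPoly (c : ℝ) : ℕ → ℝ[X]
  | 0 => X
  | n + 1 => derivative (riccatiPoly c n) * (Polynomial.C c - X ^ 2)

theorem iteratedDeriv_eqOn_riccatiPoly {h : ℝ → ℝ} {c : ℝ} {U : Set ℝ} (hU : IsOpen U)
    (hh : ∀ x ∈ U, HasDerivAt h (c - h x ^ 2) x) (n : ℕ) :
    Set.EqOn (iteratedDeriv n h) (fun x => (riccatiPoly c n).eval (h x)) U := by
  induction n with
  | zero => intro x _; simp [riccatiPoly]
  | succ n ih =>
    intro x hx
    have hloc : iteratedDeriv n h =ᶠ[𝓝 x] fun y => (riccatiPoly c n).eval (h y) :=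
      eventually_of_mem (hU.mem_nhds hx) ih
    rw [iteratedDeriv_succ, hloc.deriv_eq]
    refine (((riccatiPoly c n).hasDerivAt (h x)).comp x (hh x hx)).deriv.trans ?_
    simp [riccatiPoly]

theorem hasDerivAt_div_of_hasDerivAt_linear {u v : ℝ → ℝ} {c x : ℝ}
    (hu : HasDerivAt u (v x) x) (hv : HasDerivAt v (c * u x) x) (hx : u x ≠ 0) :
    HasDerivAt (fun y => v y / u y) (c - (v x / u x) ^ 2) x := by
  refine (hv.div hu hx).congr_deriv ?_
  field_simp

theorem iteratedDeriv_log_eq_riccatiPoly {u v : ℝ → ℝ} {c x₀ : ℝ}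
    (hu : ∀ x, HasDerivAt u (v x) x) (hv : ∀ x, HasDerivAt v (c * u x) x) (hx₀ : u x₀ ≠ 0)
    (n : ℕ) :
    iteratedDeriv (n + 1) (fun x => Real.log (u x)) x₀ = (riccatiPoly c n).eval (v x₀ / u x₀) := by
  have hU : IsOpen {x | u x ≠ 0} :=
    isOpen_ne_fun (continuous_iff_continuousAt.2 fun x => (hu x).continuousAt) continuous_const
  have hlog : deriv (fun x => Real.log (u x)) =ᶠ[𝓝 x₀] fun x => v x / u x :=
    eventually_of_mem (hU.mem_nhds hx₀) fun x hx => ((hu x).log hx).deriv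
  rw [iteratedDeriv_succ', hlog.iteratedDeriv_eq n]
  exact iteratedDeriv_eqOn_riccatiPoly hU
    (fun x hx => hasDerivAt_div_of_hasDerivAt_linear (hu x) (hv x) hx) n hx₀

theorem hasDerivAt_cosh_add_sinh (a b s x : ℝ) :
    HasDerivAt (fun T => a * cosh (s * T) + b * sinh (s * T))
      (s * b * cosh (s * x) + s * a * sinh (s * x)) x := by
  have hs : HasDerivAt (fun T => s * T) s x := by simpa using (hasDerivAt_id x).const_mul s
  exact ((hs.cosh.const_mul a).add (hs.sinh.const_mul b)).congr_deriv (by ring)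

theorem stmt4_general (α : ℝ) (h1 : 1 / (2 * Real.sqrt 3) < α) :
    (1 / 4) * (iteratedDeriv 3 (fun x => Real.log (Cg α x)) 0
        + 2 * iteratedDeriv 4 (fun x => Real.log (Cg α x)) 0
        + iteratedDeriv 5 (fun x => Real.log (Cg α x)) 0)
      = (α / 4 - α ^ 3) * (1 - 2 * α) * (6 * α - 1) / (16 * α) := by
  have hα : 0 < α := lt_trans (by positivity) h1
  have h12 : 1 / 12 < α ^ 2 := by
    have := pow_lt_pow_left₀ h1 (by positivity) two_ne_zero
    rwa [div_pow, mul_pow, sq_sqrt zero_le_three, one_pow, show (2 : ℝ) ^ 2 * 3 = 12 by norm_num]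
      at this
  have hS2 : Sg α ^ 2 = 3 * α ^ 2 / 2 - 1 / 8 := sq_sqrt (by linarith)
  have hS : 0 < Sg α := sqrt_pos.2 (by linarith)
  have key := iteratedDeriv_log_eq_riccatiPoly (u := Cg α) (x₀ := 0) (c := Sg α ^ 2)
    (hasDerivAt_cosh_add_sinh (Sg α) α (Sg α))
    (fun x => (hasDerivAt_cosh_add_sinh (Sg α * α) (Sg α * Sg α) (Sg α) x).congr_deriv
      (by simp only [Cg]; ring))
    (by simp [Cg, hS.ne'])
  rw [key 2, key 3, key 4]
  simp [riccatiPoly, Cg, hS.ne', hS2]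
  field_simp
  ring

/-- `(1/4)(f'''(0) + 2f''''(0) + f'''''(0)) = g(1 − 2α)(6α − 1)/(16α)` for `f = log C`,
`g = α/4 − α³`. -/
theorem stmt4 (α : ℝ) (h1 : 1 / (2 * Real.sqrt 3) < α) (h2 : α < 1 / 2) :
    (1 / 4) * (iteratedDeriv 3 (fun x => Real.log (Cg α x)) 0
        + 2 * iteratedDeriv 4 (fun x => Real.log (Cg α x)) 0
        + iteratedDeriv 5 (fun x => Real.log (Cg α x)) 0)
      = (α / 4 - α ^ 3) * (1 - 2 * α) * (6 * α - 1) / (16 * α) :=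
  stmt4_general α h1
end

section
/- Write f = log C. Then −(1/4)·(f''(0) + 2·f'''(0) + f''''(0)) = g·(1 − 2α)(5 − 6α) / (32α); equivalently, the operator −(1/4)(1 + d/dT)² applied to f'' and evaluated at T = 0 equals g(1 − 2α)(5 − 6α)/(32α). -/
open Real MeasureTheory Filter

/-!
Since `C'' = Σ² C`, the logarithmic derivative `u = C'/C` solves the Riccati equation
`u' = Σ² − u²`. Hence every derivative `f⁽ⁿ⁺¹⁾` of `f = log C` is a polynomial in `u`, obtained
by differentiating along the autonomous ODE, and at `T = 0` one has `u(0) = α`, so the claim is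
an identity of polynomials in `α` once `Σ² = 3α²/2 − 1/8` is substituted.
-/

open Polynomial Topology

/-- If `u' = p(u)`, then `u⁽ⁿ⁾ = (autonomousIterate p n)(u)`. -/
noncomputable def autonomousIterate (p : ℝ[X]) : ℕ → ℝ[X]
  | 0 => X
  | n + 1 => derivative (autonomousIterate p n) * p

theorem iteratedDeriv_eq_eval_autonomousIterate {p : ℝ[X]} {u : ℝ → ℝ} {U : Set ℝ}
    (hU : IsOpen U) (hu : ∀ x ∈ U, HasDerivAt u (p.eval (u x)) x) (n : ℕ) :
    ∀ x ∈ U, iteratedDeriv n u x = (autonomousIterate p n).eval (u x) := by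
  induction n with
  | zero => intro x _; simp [autonomousIterate]
  | succ n ih =>
    intro x hx
    have hloc : iteratedDeriv n u =ᶠ[𝓝 x] fun y => (autonomousIterate p n).eval (u y) :=
      eventuallyEq_of_mem (hU.mem_nhds hx) ih
    have hcomp : HasDerivAt (fun y => (autonomousIterate p n).eval (u y))
        ((derivative (autonomousIterate p n)).eval (u x) * p.eval (u x)) x :=
      ((autonomousIterate p n).hasDerivAt (u x)).comp x (hu x hx)
    rw [iteratedDeriv_succ, hloc.deriv_eq, hcomp.deriv]
    simp [autonomousIterate]

theorem HasDerivAt.div_riccati {y y' : ℝ → ℝ} {c x : ℝ} (hy : HasDerivAt y (y' x) x)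
    (hy' : HasDerivAt y' (c * y x) x) (hx : y x ≠ 0) :
    HasDerivAt (fun t => y' t / y t) (c - (y' x / y x) ^ 2) x := by
  refine (hy'.div hy hx).congr_deriv ?_
  field_simp

theorem iteratedDeriv_succ_log_eq_eval {y y' : ℝ → ℝ} {c : ℝ}
    (hy : ∀ x, HasDerivAt y (y' x) x) (hy' : ∀ x, HasDerivAt y' (c * y x) x) (n : ℕ) {x : ℝ}
    (hx : y x ≠ 0) :
    iteratedDeriv (n + 1) (fun t => log (y t)) x
      = (autonomousIterate (C c - X ^ 2) n).eval (y' x / y x) := by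
  set U := {t | y t ≠ 0}
  have hU : IsOpen U :=
    isOpen_ne_fun (continuous_iff_continuousAt.2 fun t => (hy t).continuousAt) continuous_const
  have hderiv : ∀ t ∈ U, deriv (fun t => log (y t)) t = y' t / y t :=
    fun t ht => ((hy t).log ht).deriv
  have hriccati : ∀ t ∈ U,
      HasDerivAt (fun t => y' t / y t) ((C c - X ^ 2).eval (y' t / y t)) t := by
    intro t ht
    simpa using (hy t).div_riccati (hy' t) ht
  rw [iteratedDeriv_succ', (eventuallyEq_of_mem (hU.mem_nhds hx) hderiv).iteratedDeriv_eq n]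
  exact iteratedDeriv_eq_eval_autonomousIterate hU hriccati n x hx

theorem eval_autonomousIterate_riccati (c u : ℝ) :
    (autonomousIterate (C c - X ^ 2) 1).eval u = c - u ^ 2 ∧
      (autonomousIterate (C c - X ^ 2) 2).eval u = -2 * u * (c - u ^ 2) ∧
      (autonomousIterate (C c - X ^ 2) 3).eval u = (c - u ^ 2) * (6 * u ^ 2 - 2 * c) := by
  refine ⟨?_, ?_, ?_⟩ <;>
  · simp only [autonomousIterate, derivative_mul, derivative_add, derivative_sub, derivative_zero,
      derivative_C, derivative_X, derivative_sq, derivative_one, eval_mul, eval_sub, eval_add,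
      eval_C, eval_X, eval_pow, eval_one, eval_zero]
    ring

theorem hasDerivAt_mul_cosh_add_mul_sinh (a b s x : ℝ) :
    HasDerivAt (fun t => a * cosh (s * t) + b * sinh (s * t))
      (s * b * cosh (s * x) + s * a * sinh (s * x)) x := by
  have hlin : HasDerivAt (fun t => s * t) s x := by simpa using (hasDerivAt_id x).const_mul s
  exact ((hlin.cosh.const_mul a).fun_add (hlin.sinh.const_mul b)).congr_deriv (by ring)

theorem stmt5_general (α : ℝ) (h1 : 1 / (2 * Real.sqrt 3) < α) :
    -(1 / 4) * (iteratedDeriv 2 (fun x => Real.log (Cg α x)) 0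
        + 2 * iteratedDeriv 3 (fun x => Real.log (Cg α x)) 0
        + iteratedDeriv 4 (fun x => Real.log (Cg α x)) 0)
      = (α / 4 - α ^ 3) * (1 - 2 * α) * (5 - 6 * α) / (32 * α) := by
  have hα : 0 < α := lt_trans (by positivity) h1
  have hα2 : 1 / 12 < α ^ 2 := by
    have h := pow_lt_pow_left₀ h1 (by positivity) two_ne_zero
    rw [div_pow, mul_pow, sq_sqrt (by norm_num : (0 : ℝ) ≤ 3)] at h
    linarith
  set s := Sg α
  have hs2 : s ^ 2 = 3 * α ^ 2 / 2 - 1 / 8 := sq_sqrt (by linarith)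
  have hs : 0 < s := sqrt_pos.2 (by linarith)
  have hC (x : ℝ) : HasDerivAt (Cg α) (s * α * cosh (s * x) + s * s * sinh (s * x)) x :=
    hasDerivAt_mul_cosh_add_mul_sinh s α s x
  have hC' (x : ℝ) : HasDerivAt (fun t => s * α * cosh (s * t) + s * s * sinh (s * t))
      (s ^ 2 * Cg α x) x := by
    convert hasDerivAt_mul_cosh_add_mul_sinh (s * α) (s * s) s x using 1
    simp only [Cg, s]
    ring
  have hlog (n : ℕ) := iteratedDeriv_succ_log_eq_eval hC hC' n (x := 0) (by simp [Cg, s, hs.ne'])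
  have hu0 : (s * α * cosh (s * 0) + s * s * sinh (s * 0)) / Cg α 0 = α := by
    simp [Cg, s, hs.ne']
  obtain ⟨hd2, hd3, hd4⟩ := eval_autonomousIterate_riccati (s ^ 2) α
  rw [hlog 1, hlog 2, hlog 3, hu0, hd2, hd3, hd4, hs2]
  field_simp
  ring

/-- `−(1/4)(f''(0) + 2f'''(0) + f''''(0)) = g(1 − 2α)(5 − 6α)/(32α)` for `f = log C`,
`g = α/4 − α³`. -/
theorem stmt5 (α : ℝ) (h1 : 1 / (2 * Real.sqrt 3) < α) (h2 : α < 1 / 2) :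
    -(1 / 4) * (iteratedDeriv 2 (fun x => Real.log (Cg α x)) 0
        + 2 * iteratedDeriv 3 (fun x => Real.log (Cg α x)) 0
        + iteratedDeriv 4 (fun x => Real.log (Cg α x)) 0)
      = (α / 4 - α ^ 3) * (1 - 2 * α) * (5 - 6 * α) / (32 * α) :=
  stmt5_general α h1
end

section
/- For all S > 0 and T > 0, the mixed partial derivative ∂_S ∂_T ∂_U F(S,T,U) evaluated at U = 0 equals 2·(log C)'''(S+T); moreover ∂_S ∂_T ∂_U F_odd(S,T,U) evaluated at U = 0 equals 0, so the same identity holds with F replaced by F_even. -/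
open Real MeasureTheory Filter

/-- `Ĉ(T) = 2αΣ·cosh(ΣT) + (α²+Σ²)·sinh(ΣT)`. -/
noncomputable def Chat (α : ℝ) (T : ℝ) : ℝ :=
  2 * α * Sg α * Real.cosh (Sg α * T) + (α ^ 2 + Sg α ^ 2) * Real.sinh (Sg α * T)

/-- The even part of the three-point generating function. -/
noncomputable def Feven (α : ℝ) (S T U : ℝ) : ℝ :=
  (1 / Sg α ^ 2) * (Cg α S ^ 2 * Cg α T ^ 2 * Cg α U ^ 2 * Cg α (S + T + U) ^ 2)
    / (Cg α (S + T) ^ 2 * Cg α (T + U) ^ 2 * Cg α (U + S) ^ 2)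

/-- The odd part of the three-point generating function. -/
noncomputable def Fodd (α : ℝ) (S T U : ℝ) : ℝ :=
  ((α ^ 2 - Sg α ^ 2) ^ 2 / Sg α ^ 2) *
    (Real.sinh (Sg α * S) ^ 2 * Real.sinh (Sg α * T) ^ 2 * Real.sinh (Sg α * U) ^ 2
      * Chat α (S + T + U) ^ 2)
    / (Cg α (S + T) ^ 2 * Cg α (T + U) ^ 2 * Cg α (U + S) ^ 2)

/-- `F = F_even + F_odd`. -/
noncomputable def Fg (α : ℝ) (S T U : ℝ) : ℝ := Feven α S T U + Fodd α S T U

open Set Topology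

/-!
Write `L = log ∘ C`. Since `C 0 = Σ`, the even part equals `1` at `U = 0`, so its `U`-derivative
there is its logarithmic derivative `2 (L' 0 + L' (S + T) - L' T - L' S)`. Differentiating in `T`
and then in `S` kills every term except `2 L''' (S + T)`. The odd part carries the factor
`sinh² (Σ U)`, which vanishes to second order at `U = 0`, so its `U`-derivative there is zero.
-/

lemma hasDerivAt_sq_mul_of_eq_zero {s g : ℝ → ℝ} {s' x : ℝ} (hs : HasDerivAt s s' x)
    (hsx : s x = 0) (hg : DifferentiableAt ℝ g x) :
    HasDerivAt (fun y => s y ^ 2 * g y) 0 x := by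
  simpa [hsx] using (hs.fun_pow 2).fun_mul hg.hasDerivAt

lemma hasDerivAt_threePointRatio_zero {c : ℝ → ℝ} (hc : Differentiable ℝ c) {S T : ℝ}
    (h0 : c 0 ≠ 0) (hS : c S ≠ 0) (hT : c T ≠ 0) (hST : c (S + T) ≠ 0) :
    HasDerivAt (fun U => (1 / c 0 ^ 2) * (c S ^ 2 * c T ^ 2 * c U ^ 2 * c (S + T + U) ^ 2)
        / (c (S + T) ^ 2 * c (T + U) ^ 2 * c (U + S) ^ 2))
      (2 * (logDeriv c 0 + logDeriv c (S + T) - logDeriv c T - logDeriv c S)) 0 := by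
  have hd : ∀ x, HasDerivAt c (deriv c x) x := fun x => (hc x).hasDerivAt
  have num := ((((hd 0).fun_pow 2).const_mul (c S ^ 2 * c T ^ 2)).fun_mul
    (((hd (S + T + 0)).comp_const_add (S + T) 0).fun_pow 2)).const_mul (1 / c 0 ^ 2)
  have den := ((((hd (T + 0)).comp_const_add T 0).fun_pow 2).const_mul (c (S + T) ^ 2)).fun_mul
    (((hd (0 + S)).comp_add_const 0 S).fun_pow 2)
  refine (num.fun_div den (by simp only [add_zero, zero_add]; positivity)).congr_deriv ?_
  simp only [add_zero, zero_add, logDeriv_apply]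
  field_simp
  ring

lemma deriv_deriv_of_eq_add {f : ℝ → ℝ → ℝ} {g p q : ℝ → ℝ} {S T : ℝ} (hS : 0 < S) (hT : 0 < T)
    (hg : ContDiffOn ℝ 2 g (Ioi 0)) (hq : DifferentiableAt ℝ q T)
    (hf : ∀ S' T', 0 < S' → 0 < T' → f S' T' = g (S' + T') + p S' + q T') :
    deriv (fun S' => deriv (fun T' => f S' T') T) S = deriv (deriv g) (S + T) := by
  have hg1 : ∀ x, 0 < x → DifferentiableAt ℝ g x := fun x hx =>
    (hg.differentiableOn (by norm_num)).differentiableAt (Ioi_mem_nhds hx)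
  have hg2 : DifferentiableAt ℝ (deriv g) (S + T) :=
    ((hg.deriv_of_isOpen isOpen_Ioi (m := 1) (by norm_num)).differentiableOn
      one_ne_zero).differentiableAt (Ioi_mem_nhds (by positivity))
  have inner : ∀ S', 0 < S' → deriv (fun T' => f S' T') T = deriv g (S' + T) + deriv q T := by
    intro S' hS'
    have heq : (fun T' => f S' T') =ᶠ[𝓝 T] fun T' => g (S' + T') + p S' + q T' := by
      filter_upwards [Ioi_mem_nhds hT] with T' hT' using hf S' T' hS' hT'
    rw [heq.deriv_eq]
    exact ((((hg1 _ (by positivity)).hasDerivAt.comp_const_add S' T).add_const (p S')).add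
      hq.hasDerivAt).deriv
  have heq : (fun S' => deriv (fun T' => f S' T') T) =ᶠ[𝓝 S]
      fun S' => deriv g (S' + T) + deriv q T := by
    filter_upwards [Ioi_mem_nhds hS] with S' hS' using inner S' hS'
  rw [heq.deriv_eq]
  exact ((hg2.hasDerivAt.comp_add_const S T).add_const _).deriv

lemma deriv_deriv_eq_two_mul_iteratedDeriv_log {c : ℝ → ℝ} {f : ℝ → ℝ → ℝ} (a : ℝ) {S T : ℝ}
    (hS : 0 < S) (hT : 0 < T) (hc : ContDiffOn ℝ 3 c (Ioi 0)) (hc0 : ∀ x ∈ Ioi 0, c x ≠ 0)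
    (hf : ∀ S' T', 0 < S' → 0 < T' →
      f S' T' = 2 * (a + logDeriv c (S' + T') - logDeriv c T' - logDeriv c S')) :
    deriv (fun S' => deriv (fun T' => f S' T') T) S
      = 2 * iteratedDeriv 3 (fun x => Real.log (c x)) (S + T) := by
  set ℓ := fun x => Real.log (c x)
  have hℓ : ContDiffOn ℝ 3 ℓ (Ioi 0) := hc.log hc0
  have hℓ' : ContDiffOn ℝ 2 (deriv ℓ) (Ioi 0) := hℓ.deriv_of_isOpen isOpen_Ioi (by norm_num)
  have hlog : ∀ x, 0 < x → logDeriv c x = deriv ℓ x := fun x hx =>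
    (Real.deriv_log_comp_eq_logDeriv
      ((hc.differentiableOn (by norm_num)).differentiableAt (Ioi_mem_nhds hx)) (hc0 x hx)).symm
  rw [deriv_deriv_of_eq_add (g := fun x => 2 * deriv ℓ x) (p := fun S' => 2 * (a - deriv ℓ S'))
      (q := fun T' => -(2 * deriv ℓ T')) hS hT (contDiffOn_const.mul hℓ')
      (((hℓ'.differentiableOn (by norm_num)).differentiableAt (Ioi_mem_nhds hT)).const_mul 2).neg
      (fun S' T' hS' hT' => by
        rw [hf S' T' hS' hT', hlog _ hS', hlog _ hT', hlog _ (by positivity)]; ring)]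
  simp only [deriv_const_mul_field', iteratedDeriv_eq_iterate, Function.iterate_succ_apply',
    Function.iterate_zero_apply]

lemma Sg_pos {α : ℝ} (h1 : 1 / (2 * Real.sqrt 3) < α) : 0 < Sg α := by
  have h3 : (0:ℝ) < Real.sqrt 3 := Real.sqrt_pos.mpr (by norm_num)
  have hsq : Real.sqrt 3 ^ 2 = 3 := Real.sq_sqrt (by norm_num)
  have key : 1 < α * (2 * Real.sqrt 3) := (div_lt_iff₀ (by positivity)).mp h1
  have h12 : 1 < 12 * α ^ 2 := by nlinarith [sq_nonneg (α * (2 * Real.sqrt 3) - 1)]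
  exact Real.sqrt_pos.mpr (by nlinarith)

lemma contDiff_Cg (α : ℝ) {n : WithTop ℕ∞} : ContDiff ℝ n (Cg α) := by
  unfold Cg; fun_prop

lemma contDiff_Chat (α : ℝ) {n : WithTop ℕ∞} : ContDiff ℝ n (Chat α) := by
  unfold Chat; fun_prop

lemma Cg_zero (α : ℝ) : Cg α 0 = Sg α := by simp [Cg]

lemma Cg_pos {α x : ℝ} (hα : 0 ≤ α) (hSg : 0 < Sg α) (hx : 0 ≤ x) : 0 < Cg α x := by
  have := mul_pos hSg (Real.cosh_pos (Sg α * x))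
  have := mul_nonneg hα (Real.sinh_nonneg_iff.mpr (by positivity : 0 ≤ Sg α * x))
  unfold Cg; linarith

lemma hasDerivAt_Feven_zero {α S T : ℝ} (hα : 0 ≤ α) (hSg : 0 < Sg α) (hS : 0 ≤ S) (hT : 0 ≤ T) :
    HasDerivAt (Feven α S T) (2 * (logDeriv (Cg α) 0 + logDeriv (Cg α) (S + T)
      - logDeriv (Cg α) T - logDeriv (Cg α) S)) 0 := by
  have hC : ∀ x, 0 ≤ x → Cg α x ≠ 0 := fun x hx => (Cg_pos hα hSg hx).ne'
  have h := hasDerivAt_threePointRatio_zero ((contDiff_Cg α (n := 1)).differentiable one_ne_zero)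
    (hC 0 le_rfl) (hC S hS) (hC T hT) (hC _ (add_nonneg hS hT))
  rw [Cg_zero] at h
  exact h

lemma hasDerivAt_Fodd_zero {α S T : ℝ} (hα : 0 ≤ α) (hSg : 0 < Sg α) (hS : 0 ≤ S) (hT : 0 ≤ T) :
    HasDerivAt (Fodd α S T) 0 0 := by
  have hrepr : Fodd α S T = fun U => sinh (Sg α * U) ^ 2 *
      ((α ^ 2 - Sg α ^ 2) ^ 2 / Sg α ^ 2 * (sinh (Sg α * S) ^ 2 * sinh (Sg α * T) ^ 2
        * Chat α (S + T + U) ^ 2) / (Cg α (S + T) ^ 2 * Cg α (T + U) ^ 2 * Cg α (U + S) ^ 2)) := by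
    funext U; unfold Fodd; ring
  have hCg := (contDiff_Cg α (n := 1)).differentiable one_ne_zero
  have hChat := (contDiff_Chat α (n := 1)).differentiable one_ne_zero
  have hden : Cg α (S + T) ^ 2 * Cg α (T + 0) ^ 2 * Cg α (0 + S) ^ 2 ≠ 0 := by
    simp only [add_zero, zero_add]
    have := Cg_pos hα hSg hS; have := Cg_pos hα hSg hT; have := Cg_pos hα hSg (add_nonneg hS hT)
    positivity
  rw [hrepr]
  exact hasDerivAt_sq_mul_of_eq_zero ((hasDerivAt_id 0).const_mul (Sg α)).sinh (by simp)
    (DifferentiableAt.div (by fun_prop) (by fun_prop) hden)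

theorem stmt7_general (α : ℝ) (h1 : 1 / (2 * Real.sqrt 3) < α) :
    ∀ S T : ℝ, 0 < S → 0 < T →
      (deriv (fun S' => deriv (fun T' => deriv (fun U' => Fg α S' T' U') 0) T) S
          = 2 * iteratedDeriv 3 (fun x => Real.log (Cg α x)) (S + T)) ∧
      (deriv (fun S' => deriv (fun T' => deriv (fun U' => Fodd α S' T' U') 0) T) S = 0) ∧
      (deriv (fun S' => deriv (fun T' => deriv (fun U' => Feven α S' T' U') 0) T) S
          = 2 * iteratedDeriv 3 (fun x => Real.log (Cg α x)) (S + T)) := by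
  intro S T hS hT
  have hSg := Sg_pos h1
  have hα : 0 ≤ α := le_trans (by positivity) h1.le
  have hC : ContDiffOn ℝ 3 (Cg α) (Ioi 0) := (contDiff_Cg α).contDiffOn
  have hC0 : ∀ x ∈ Ioi 0, Cg α x ≠ 0 := fun x hx => (Cg_pos hα hSg (le_of_lt hx)).ne'
  have hodd : ∀ S' T' : ℝ, 0 < S' → 0 < T' → deriv (fun U => Fodd α S' T' U) 0 = 0 :=
    fun S' T' hS' hT' => (hasDerivAt_Fodd_zero hα hSg hS'.le hT'.le).deriv
  have heven : ∀ S' T' : ℝ, 0 < S' → 0 < T' → deriv (fun U => Feven α S' T' U) 0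
      = 2 * (logDeriv (Cg α) 0 + logDeriv (Cg α) (S' + T') - logDeriv (Cg α) T'
        - logDeriv (Cg α) S') :=
    fun S' T' hS' hT' => (hasDerivAt_Feven_zero hα hSg hS'.le hT'.le).deriv
  have hsum : ∀ S' T' : ℝ, 0 < S' → 0 < T' → deriv (fun U => Fg α S' T' U) 0
      = 2 * (logDeriv (Cg α) 0 + logDeriv (Cg α) (S' + T') - logDeriv (Cg α) T'
        - logDeriv (Cg α) S') := fun S' T' hS' hT' =>
    ((hasDerivAt_Feven_zero hα hSg hS'.le hT'.le).add
      (hasDerivAt_Fodd_zero hα hSg hS'.le hT'.le)).deriv.trans (add_zero _)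
  refine ⟨deriv_deriv_eq_two_mul_iteratedDeriv_log _ hS hT hC hC0 hsum, ?_,
    deriv_deriv_eq_two_mul_iteratedDeriv_log _ hS hT hC hC0 heven⟩
  simpa using deriv_deriv_of_eq_add (g := 0) (p := 0) (q := 0) hS hT contDiffOn_const
    (differentiableAt_const _) (fun S' T' hS' hT' => by simp [hodd S' T' hS' hT'])

/-- For `S, T > 0`, `∂_S ∂_T ∂_U F(S,T,U)|_{U=0} = 2·(log C)'''(S+T)`; moreover the same
mixed partial of `F_odd` vanishes there, so the identity also holds for `F_even`. -/
theorem stmt7 (α : ℝ) (h1 : 1 / (2 * Real.sqrt 3) < α) (h2 : α < 1 / 2) :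
    ∀ S T : ℝ, 0 < S → 0 < T →
      (deriv (fun S' => deriv (fun T' => deriv (fun U' => Fg α S' T' U') 0) T) S
          = 2 * iteratedDeriv 3 (fun x => Real.log (Cg α x)) (S + T)) ∧
      (deriv (fun S' => deriv (fun T' => deriv (fun U' => Fodd α S' T' U') 0) T) S = 0) ∧
      (deriv (fun S' => deriv (fun T' => deriv (fun U' => Feven α S' T' U') 0) T) S
          = 2 * iteratedDeriv 3 (fun x => Real.log (Cg α x)) (S + T)) :=
  stmt7_general α h1
end

section
/- As z → +∞, z·W(z) converges to g; that is, the disk function W(z) falls off like g/z at infinity. -/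
open Real MeasureTheory Filter

/-- The disk function `W(z)` of random cubic maps (with `g = α/4 − α³`). -/
noncomputable def Wdisk (α : ℝ) (z : ℝ) : ℝ :=
  (1 / 2) * (z - z ^ 2 + (z - α - 1 / 2)
    * Real.sqrt ((z + α - 1 / 2) ^ 2 - 2 * (α / 4 - α ^ 3) / α))

/-- The characteristic curve `ẑ(T) = α + 1/2 + Σ²/(sinh(ΣT)·C(T))`. -/
noncomputable def zhat (α : ℝ) (T : ℝ) : ℝ :=
  α + 1 / 2 + Sg α ^ 2 / (Real.sinh (Sg α * T) * Cg α T)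

/-!
Write `a = α − 1/2`, `c = 2g/α = 1/2 − 2α²` and `D(z) = √((z + a)² − c) + z + a`. Rationalising
`√((z + a)² − c) − (z + a) = −c/D(z)`, the quadratic and constant parts of `2W(z)` cancel and
`z·W(z) = (c/4)·(4α − c/D(z))·(z/D(z))`. Since `D(z)/z = ρ(1/z)` for a function `ρ` continuous
at `0` with `ρ(0) = 2`, the right side tends to `(c/4)·4α/2 = g`.
-/

open Topology

namespace Wdisk

variable {α : ℝ}

theorem two_mul_g_div (hα : α ≠ 0) : 2 * (α / 4 - α ^ 3) / α = 1 / 2 - 2 * α ^ 2 := by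
  field_simp
  ring

noncomputable def rho (α t : ℝ) : ℝ :=
  √((1 + (α - 1 / 2) * t) ^ 2 - (1 / 2 - 2 * α ^ 2) * t ^ 2) + 1 + (α - 1 / 2) * t

theorem rho_zero : rho α 0 = 2 := by
  norm_num [rho]

theorem continuous_rho : Continuous (rho α) := by
  unfold rho
  fun_prop

theorem rho_inv {z : ℝ} (hz : 0 < z) :
    rho α z⁻¹ = (√((z + α - 1 / 2) ^ 2 - (1 / 2 - 2 * α ^ 2)) + z + α - 1 / 2) / z := by
  have hrad : (1 + (α - 1 / 2) * z⁻¹) ^ 2 - (1 / 2 - 2 * α ^ 2) * z⁻¹ ^ 2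
      = ((z + α - 1 / 2) ^ 2 - (1 / 2 - 2 * α ^ 2)) / z ^ 2 := by
    field_simp
    ring
  rw [rho, hrad, Real.sqrt_div' _ (sq_nonneg z), Real.sqrt_sq hz.le]
  field_simp
  ring

theorem mul_eq_rho (hα : α ≠ 0) {z : ℝ} (hz : 0 < z) (hza : 0 < z + α - 1 / 2)
    (hrad : 0 ≤ (z + α - 1 / 2) ^ 2 - (1 / 2 - 2 * α ^ 2)) :
    z * Wdisk α z = (1 / 2 - 2 * α ^ 2) / 4
      * (4 * α - (1 / 2 - 2 * α ^ 2) * z⁻¹ / rho α z⁻¹) / rho α z⁻¹ := by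
  have hS := Real.sq_sqrt hrad
  have hS0 := Real.sqrt_nonneg ((z + α - 1 / 2) ^ 2 - (1 / 2 - 2 * α ^ 2))
  rw [rho_inv hz, Wdisk, two_mul_g_div hα]
  generalize √((z + α - 1 / 2) ^ 2 - (1 / 2 - 2 * α ^ 2)) = S at *
  have hD : S + z + α - 1 / 2 ≠ 0 := by linarith
  generalize hDdef : S + z + α - 1 / 2 = D at hD ⊢
  field_simp
  subst hDdef
  linear_combination (8 * (z - α - 1 / 2) * (S + z + α - 1 / 2) - 8 * (α ^ 2 - 1 / 4)) * hS

theorem tendsto_mul_Wdisk (hα : α ≠ 0) :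
    Tendsto (fun z => z * Wdisk α z) atTop (𝓝 (α / 4 - α ^ 3)) := by
  have hρ : Tendsto (fun z : ℝ => rho α z⁻¹) atTop (𝓝 2) :=
    rho_zero (α := α) ▸ continuous_rho.continuousAt.tendsto.comp tendsto_inv_atTop_zero
  have hlim := ((tendsto_const_nhds (x := 4 * α)).sub
    ((tendsto_inv_atTop_zero.const_mul (1 / 2 - 2 * α ^ 2)).div hρ two_ne_zero)).const_mul
    ((1 / 2 - 2 * α ^ 2) / 4) |>.div hρ two_ne_zero
  rw [show α / 4 - α ^ 3 = (1 / 2 - 2 * α ^ 2) / 4 * (4 * α - (1 / 2 - 2 * α ^ 2) * 0 / 2) / 2 by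
    ring]
  refine hlim.congr' ?_
  filter_upwards [eventually_gt_atTop 0,
    eventually_ge_atTop (1 / 2 - α + 1 + |1 / 2 - 2 * α ^ 2|)] with z hz hz_large
  have hc := le_abs_self (1 / 2 - 2 * α ^ 2)
  have hza : 0 < z + α - 1 / 2 := by linarith [abs_nonneg (1 / 2 - 2 * α ^ 2)]
  exact (mul_eq_rho hα hz hza (by nlinarith)).symm

end Wdisk

theorem stmt17_general (α : ℝ) (h1 : 1 / (2 * Real.sqrt 3) < α) :
    Filter.Tendsto (fun z => z * Wdisk α z) Filter.atTop (nhds (α / 4 - α ^ 3)) :=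
  Wdisk.tendsto_mul_Wdisk (lt_trans (by positivity) h1).ne'

/-- `z·W(z) → g = α/4 − α³` as `z → +∞`. -/
theorem stmt17 (α : ℝ) (h1 : 1 / (2 * Real.sqrt 3) < α) (h2 : α < 1 / 2) :
    Filter.Tendsto (fun z => z * Wdisk α z) Filter.atTop (nhds (α / 4 - α ^ 3)) :=
  stmt17_general α h1
end

section
/- Let B : ℝ → ℝ be continuous and define A(T) = ∫₀^T (T − u)·e^{−(T−u)}·B(u) du for T ≥ 0. Then A is twice differentiable on (0,∞) and A''(T) + 2·A'(T) + A(T) = B(T) for every T > 0. (This inverts the double exponential convolution: if A is the convolution of B with the density s·e^{−s} of the sum of two independent unit-rate exponential variables, then B = (1 + d/dT)² A.) -/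
open Real

/-! Since `(T - u) e^{-(T-u)} = e^{-T} · (T - u) e^u`, we have `A = e^{-T} P` with
`P(T) = ∫₀^T (T - u) e^u B(u) du`, and `P' = F := ∫₀^T e^u B(u) du`, `F' = e^T B`.
As `(e^{-T} H)' = e^{-T} H' - e^{-T} H`, the function `Q = e^{-T} F` satisfies
`A' = Q - A` and `Q' = B - Q`; eliminating `Q` gives `A'' + 2A' + A = B`. -/

theorem hasDerivAt_intervalIntegral_sub_mul {g : ℝ → ℝ} (hg : Continuous g) (a x : ℝ) :
    HasDerivAt (fun T => ∫ u in a..T, (T - u) * g u) (∫ u in a..x, g u) x := by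
  have hug : Continuous fun u => u * g u := continuous_id.mul hg
  have hsplit : (fun T => ∫ u in a..T, (T - u) * g u) =
      fun T => T * (∫ u in a..T, g u) - ∫ u in a..T, u * g u := by
    funext T
    rw [← intervalIntegral.integral_const_mul,
      ← intervalIntegral.integral_sub ((hg.intervalIntegrable a T).const_mul T)
        (hug.intervalIntegrable a T)]
    exact intervalIntegral.integral_congr fun u _ => by ring
  rw [hsplit]
  have hderiv := ((hasDerivAt_id x).mul (hg.integral_hasStrictDerivAt a x).hasDerivAt).sub
    (hug.integral_hasStrictDerivAt a x).hasDerivAt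
  exact hderiv.congr_deriv (by simp)

theorem hasDerivAt_exp_neg_mul {P : ℝ → ℝ} {p x : ℝ} (h : HasDerivAt P p x) :
    HasDerivAt (fun T => exp (-T) * P T) (exp (-x) * p - exp (-x) * P x) x := by
  have hexp : HasDerivAt (fun T => exp (-T)) (-exp (-x)) x := by
    simpa using (hasDerivAt_id x).neg.exp
  exact (hexp.mul h).congr_deriv (by ring)

/-- If `A(T) = ∫₀^T (T − u)e^{−(T−u)} B(u) du` with `B` continuous, then `A` is twice
differentiable on `(0,∞)` and `A'' + 2A' + A = B` there. -/
theorem stmt18 (B : ℝ → ℝ) (hB : Continuous B) (A : ℝ → ℝ)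
    (hA : A = fun T => ∫ u in (0 : ℝ)..T, (T - u) * Real.exp (-(T - u)) * B u) :
    (∀ T : ℝ, 0 < T → DifferentiableAt ℝ A T) ∧
    (∀ T : ℝ, 0 < T → DifferentiableAt ℝ (deriv A) T) ∧
    ∀ T : ℝ, 0 < T → deriv (deriv A) T + 2 * deriv A T + A T = B T := by
  set Q : ℝ → ℝ := fun T => exp (-T) * ∫ u in (0 : ℝ)..T, exp u * B u
  have heB : Continuous fun u => exp u * B u := continuous_exp.mul hB
  have hA_eq : A = fun T => exp (-T) * ∫ u in (0 : ℝ)..T, (T - u) * (exp u * B u) := by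
    rw [hA]; funext T
    rw [← intervalIntegral.integral_const_mul]
    refine intervalIntegral.integral_congr fun u _ => ?_
    rw [show -(T - u) = -T + u by ring, exp_add]
    ring
  have hA' : ∀ T, HasDerivAt A (Q T - A T) T := fun T => by
    rw [hA_eq]
    exact hasDerivAt_exp_neg_mul (hasDerivAt_intervalIntegral_sub_mul heB 0 T)
  have hQ' : ∀ T, HasDerivAt Q (B T - Q T) T := fun T => by
    convert hasDerivAt_exp_neg_mul (heB.integral_hasStrictDerivAt 0 T).hasDerivAt using 1
    rw [← mul_assoc, ← exp_add, neg_add_cancel, exp_zero, one_mul]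
  have hDA : deriv A = fun T => Q T - A T := funext fun T => (hA' T).deriv
  have hA'' : ∀ T, HasDerivAt (deriv A) (B T - Q T - (Q T - A T)) T := fun T => by
    rw [hDA]; exact (hQ' T).sub (hA' T)
  refine ⟨fun T _ => (hA' T).differentiableAt, fun T _ => (hA'' T).differentiableAt,
    fun T _ => ?_⟩
  rw [(hA'' T).deriv, hDA]
  ring
end
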